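/- Let S and Y be A-bounded operators on H admitting A-adjoints (i.e. there exist Ss, Ys with A∘Ss = S*∘A and A∘Ys = Y*∘A). Then w_𝔸([[0,0],[Y,S]]) ≤ w_A(S) + (1/2)·‖Y‖_A. -/

import Mathlib

noncomputable def sInner {E : Type*} [NormedAddCommGroup E] [InnerProductSpace ℂ E]
    (A : E →L[ℂ] E) (x y : E) : ℂ := inner ℂ (A x) y

noncomputable def sNorm {E : Type*} [NormedAddCommGroup E] [InnerProductSpace ℂ E]
    (A : E →L[ℂ] E) (x : E) : ℝ := Real.sqrt (sInner A x x).re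

/-- The `A`-operator seminorm. -/
noncomputable def opSNorm {E : Type*} [NormedAddCommGroup E] [InnerProductSpace ℂ E]
    (A T : E →L[ℂ] E) : ℝ := sSup {c | ∃ x : E, sNorm A x = 1 ∧ c = sNorm A (T x)}

/-- The `A`-numerical radius. -/
noncomputable def numRad {E : Type*} [NormedAddCommGroup E] [InnerProductSpace ℂ E]
    (A T : E →L[ℂ] E) : ℝ := sSup {c | ∃ x : E, sNorm A x = 1 ∧ c = ‖sInner A (T x) x‖}

/-- `T` is `A`-bounded. -/
def ABounded {E : Type*} [NormedAddCommGroup E] [InnerProductSpace ℂ E]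
    (A T : E →L[ℂ] E) : Prop := ∃ c > 0, ∀ x : E, sNorm A (T x) ≤ c * sNorm A x

/-- The 2×2 block operator `[[T, X], [Y, S]]` on `H ⊕ H` (with the ℓ² product structure). -/
noncomputable def blk {H : Type*} [NormedAddCommGroup H] [InnerProductSpace ℂ H]
    (T X Y S : H →L[ℂ] H) : WithLp 2 (H × H) →L[ℂ] WithLp 2 (H × H) :=
  ((WithLp.prodContinuousLinearEquiv 2 ℂ H H).symm.toContinuousLinearMap.comp
    (((T.coprod X).prod (Y.coprod S)).comp
      (WithLp.prodContinuousLinearEquiv 2 ℂ H H).toContinuousLinearMap))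

/-- The diagonal operator `𝔸 = diag(A, A)` on `H ⊕ H`. -/
noncomputable def twoA {H : Type*} [NormedAddCommGroup H] [InnerProductSpace ℂ H]
    (A : H →L[ℂ] H) : WithLp 2 (H × H) →L[ℂ] WithLp 2 (H × H) := blk A 0 0 A

/-!
For `z = (x, y)` with `‖x‖_A² + ‖y‖_A² = 1` the block operator gives
`⟨[[0,0],[Y,S]] z, z⟩_𝔸 = ⟨Y x, y⟩_A + ⟨S y, y⟩_A`. By the Cauchy–Schwarz inequality for the
semi-inner product `⟨·,·⟩_A`, the first term is at most `‖Y‖_A ‖x‖_A ‖y‖_A ≤ ‖Y‖_A / 2`, and the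
second is at most `w_A(S) ‖y‖_A² ≤ w_A(S)`.
-/

open ComplexConjugate

section Seminorm

variable {E : Type*} [NormedAddCommGroup E] [InnerProductSpace ℂ E] {A : E →L[ℂ] E}

lemma conj_sInner (hA : A.IsPositive) (x y : E) : conj (sInner A y x) = sInner A x y := by
  rw [sInner, inner_conj_symm, ← hA.inner_left_eq_inner_right, sInner]

noncomputable abbrev ContinuousLinearMap.IsPositive.preInnerProductCore (hA : A.IsPositive) :
    PreInnerProductSpace.Core ℂ E where
  inner := sInner A
  conj_inner_symm := conj_sInner hA
  re_inner_nonneg := hA.re_inner_nonneg_left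
  add_left x y z := by simp only [sInner, map_add, inner_add_left]
  smul_left x y r := by simp only [sInner, map_smul, inner_smul_left]

lemma sNorm_nonneg (A : E →L[ℂ] E) (x : E) : 0 ≤ sNorm A x := Real.sqrt_nonneg _

lemma sNorm_sq (hA : A.IsPositive) (x : E) : sNorm A x ^ 2 = (sInner A x x).re :=
  Real.sq_sqrt (hA.re_inner_nonneg_left x)

lemma norm_sInner_le (hA : A.IsPositive) (x y : E) :
    ‖sInner A x y‖ ≤ sNorm A x * sNorm A y := by
  have hsymm : ‖sInner A y x‖ = ‖sInner A x y‖ := by rw [← conj_sInner hA, RCLike.norm_conj]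
  have hcs : ‖sInner A x y‖ * ‖sInner A y x‖ ≤ (sInner A x x).re * (sInner A y y).re :=
    InnerProductSpace.Core.inner_mul_inner_self_le (c := hA.preInnerProductCore) x y
  rw [hsymm, ← sNorm_sq hA, ← sNorm_sq hA, ← sq, ← mul_pow] at hcs
  exact (pow_le_pow_iff_left₀ (norm_nonneg _)
    (mul_nonneg (sNorm_nonneg A x) (sNorm_nonneg A y)) two_ne_zero).mp hcs

lemma sInner_smul_smul (c : ℂ) (x y : E) :
    sInner A (c • x) (c • y) = ((‖c‖ ^ 2 : ℝ) : ℂ) * sInner A x y := by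
  rw [sInner, map_smul, inner_smul_left, inner_smul_right, ← mul_assoc, RCLike.conj_mul, sInner]
  norm_cast

lemma sNorm_smul (c : ℂ) (x : E) : sNorm A (c • x) = ‖c‖ * sNorm A x := by
  rw [sNorm, sInner_smul_smul, Complex.re_ofReal_mul, Real.sqrt_mul (by positivity),
    Real.sqrt_sq (norm_nonneg c), sNorm]

lemma le_sSup_mul_sNorm_pow {g : E → ℝ} {k : ℕ} (hk : k ≠ 0)
    (hg : ∀ (c : ℂ) (x : E), g (c • x) = ‖c‖ ^ k * g x) {C : ℝ}
    (hC : ∀ x, g x ≤ C * sNorm A x ^ k) (x : E) :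
    g x ≤ sSup {c | ∃ u : E, sNorm A u = 1 ∧ c = g u} * sNorm A x ^ k := by
  rcases (sNorm_nonneg A x).eq_or_lt with hx | hx
  · simpa [← hx, zero_pow hk] using hC x
  · have hbdd : BddAbove {c | ∃ u : E, sNorm A u = 1 ∧ c = g u} :=
      ⟨C, by rintro _ ⟨u, hu, rfl⟩; simpa [hu] using hC u⟩
    have hunit : sNorm A ((sNorm A x : ℂ)⁻¹ • x) = 1 := by
      rw [sNorm_smul, norm_inv, Complex.norm_real, Real.norm_of_nonneg hx.le,
        inv_mul_cancel₀ hx.ne']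
    have hle := le_csSup hbdd ⟨_, hunit, rfl⟩
    rw [hg, norm_inv, Complex.norm_real, Real.norm_of_nonneg hx.le, inv_pow,
      inv_mul_le_iff₀ (by positivity), mul_comm] at hle
    exact hle

lemma norm_sInner_apply_self_le (hA : A.IsPositive) {T : E →L[ℂ] E} (hT : ABounded A T)
    (x : E) : ‖sInner A (T x) x‖ ≤ numRad A T * sNorm A x ^ 2 := by
  obtain ⟨C, -, hC⟩ := hT
  refine le_sSup_mul_sNorm_pow (g := fun x => ‖sInner A (T x) x‖) two_ne_zero
    (fun c x => ?_) (C := C) (fun x => ?_) x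
  · rw [map_smul, sInner_smul_smul, norm_mul, Complex.norm_real,
      Real.norm_of_nonneg (by positivity)]
  · calc ‖sInner A (T x) x‖ ≤ sNorm A (T x) * sNorm A x := norm_sInner_le hA _ _
      _ ≤ C * sNorm A x * sNorm A x := by gcongr; exacts [sNorm_nonneg A x, hC x]
      _ = C * sNorm A x ^ 2 := by ring

lemma sNorm_apply_le {T : E →L[ℂ] E} (hT : ABounded A T) (x : E) :
    sNorm A (T x) ≤ opSNorm A T * sNorm A x := by
  obtain ⟨C, -, hC⟩ := hT
  have h := le_sSup_mul_sNorm_pow (g := fun x => sNorm A (T x)) one_ne_zero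
    (fun c x => by rw [map_smul, sNorm_smul, pow_one]) (C := C)
    (by simpa only [pow_one] using hC) x
  rwa [pow_one] at h

lemma numRad_nonneg (A T : E →L[ℂ] E) : 0 ≤ numRad A T :=
  Real.sSup_nonneg (by rintro c ⟨x, -, rfl⟩; exact norm_nonneg _)

lemma opSNorm_nonneg (A T : E →L[ℂ] E) : 0 ≤ opSNorm A T :=
  Real.sSup_nonneg (by rintro c ⟨x, -, rfl⟩; exact sNorm_nonneg _ _)

end Seminorm

section Block

variable {H : Type*} [NormedAddCommGroup H] [InnerProductSpace ℂ H]

@[simp]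
lemma blk_apply_fst (T X Y S : H →L[ℂ] H) (z : WithLp 2 (H × H)) :
    (blk T X Y S z).fst = T z.fst + X z.snd := rfl

@[simp]
lemma blk_apply_snd (T X Y S : H →L[ℂ] H) (z : WithLp 2 (H × H)) :
    (blk T X Y S z).snd = Y z.fst + S z.snd := rfl

lemma sInner_twoA (A : H →L[ℂ] H) (u v : WithLp 2 (H × H)) :
    sInner (twoA A) u v = sInner A u.fst v.fst + sInner A u.snd v.snd := by
  simp [sInner, twoA, WithLp.prod_inner_apply]

lemma sNorm_twoA_sq {A : H →L[ℂ] H} (hA : A.IsPositive) (z : WithLp 2 (H × H)) :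
    sNorm (twoA A) z ^ 2 = sNorm A z.fst ^ 2 + sNorm A z.snd ^ 2 := by
  rw [sNorm, sInner_twoA, Complex.add_re, Real.sq_sqrt, sNorm_sq hA, sNorm_sq hA]
  exact add_nonneg (hA.re_inner_nonneg_left _) (hA.re_inner_nonneg_left _)

lemma sInner_twoA_blk_zero_zero (A Y S : H →L[ℂ] H) (z : WithLp 2 (H × H)) :
    sInner (twoA A) (blk 0 0 Y S z) z = sInner A (Y z.fst) z.snd + sInner A (S z.snd) z.snd := by
  rw [sInner_twoA]
  simp [sInner]

end Block

theorem stmt7_general {H : Type*} [NormedAddCommGroup H] [InnerProductSpace ℂ H]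
    (A : H →L[ℂ] H) (hA : A.IsPositive)
    (S Y : H →L[ℂ] H) (hS : ABounded A S) (hY : ABounded A Y) :
    numRad (twoA A) (blk 0 0 Y S) ≤ numRad A S + (1 / 2) * opSNorm A Y := by
  have hw := numRad_nonneg A S
  have hY0 := opSNorm_nonneg A Y
  refine Real.sSup_le ?_ (by positivity)
  rintro _ ⟨z, hz, rfl⟩
  set a := sNorm A z.fst
  set b := sNorm A z.snd
  have hsum : a ^ 2 + b ^ 2 = 1 := by rw [← sNorm_twoA_sq hA, hz, one_pow]
  have hYterm : ‖sInner A (Y z.fst) z.snd‖ ≤ opSNorm A Y * a * b :=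
    (norm_sInner_le hA _ _).trans <|
      mul_le_mul_of_nonneg_right (sNorm_apply_le hY _) (sNorm_nonneg A _)
  calc ‖sInner (twoA A) (blk 0 0 Y S z) z‖
      = ‖sInner A (Y z.fst) z.snd + sInner A (S z.snd) z.snd‖ := by
        rw [sInner_twoA_blk_zero_zero]
    _ ≤ opSNorm A Y * a * b + numRad A S * b ^ 2 :=
        (norm_add_le _ _).trans (add_le_add hYterm (norm_sInner_apply_self_le hA hS z.snd))
    _ ≤ numRad A S + (1 / 2) * opSNorm A Y := by
        nlinarith [mul_nonneg hY0 (sq_nonneg (a - b)), mul_nonneg hw (sq_nonneg a)]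

theorem stmt7 {H : Type*} [NormedAddCommGroup H] [InnerProductSpace ℂ H] [CompleteSpace H]
    (A : H →L[ℂ] H) (hA : A.IsPositive)
    (S Y : H →L[ℂ] H) (hS : ABounded A S) (hY : ABounded A Y)
    (hSadm : ∃ Ss : H →L[ℂ] H, A.comp Ss = (ContinuousLinearMap.adjoint S).comp A)
    (hYadm : ∃ Ys : H →L[ℂ] H, A.comp Ys = (ContinuousLinearMap.adjoint Y).comp A) :
    numRad (twoA A) (blk 0 0 Y S) ≤ numRad A S + (1 / 2) * opSNorm A Y :=
  stmt7_general A hA S Y hS hY
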